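/- For sets X_1,…,X_k each of cardinality n ≥ N+1, the probability that a uniformly random k-tuple of functions (f_1,…,f_k) with f_i : X_i → X_{i+1} is eventually N-cyclic equals p_{k,N}(n) = (1/N) · n^{−k(N−1)} · ((n−1)!/(n−N)!)^k · (1 − (1 − N/n)^k); equivalently, the number of eventually N-cyclic k-tuples divided by n^{kn} equals this quantity. -/

import Mathlib

universe u

variable {k : ℕ} {X : Fin (k + 1) → Type u}

def step (f : ∀ i : Fin (k + 1), X i → X (i + 1)) : (Σ i, X i) → (Σ i, X i) :=
  fun p => ⟨p.1 + 1, f p.1 p.2⟩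

open Fin.NatCast Fin.CommRing in
lemma step_iterate_fst (f : ∀ i : Fin (k + 1), X i → X (i + 1)) (p : Σ i, X i) (m : ℕ) :
    ((step f)^[m] p).1 = p.1 + (m : Fin (k + 1)) := by
  induction m with
  | zero => simp
  | succ m ih =>
    rw [Function.iterate_succ_apply']
    show ((step f)^[m] p).1 + 1 = _
    rw [ih]; push_cast; ring

def comp (f : ∀ i : Fin (k + 1), X i → X (i + 1)) (v : X 0) : X 0 :=
  have h : ((step f)^[k + 1] (⟨0, v⟩ : Σ i, X i)).1 = 0 := by
    rw [step_iterate_fst]; simp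
  h ▸ ((step f)^[k + 1] (⟨0, v⟩ : Σ i, X i)).2

def IsCyclicOn {α : Type*} (g : α → α) (U : Set α) : Prop :=
  Set.BijOn g U U ∧ ∀ x ∈ U, ∀ y ∈ U, ∃ j : ℕ, g^[j] x = y

def EventuallyNCyclic (N : ℕ) (f : ∀ i : Fin (k + 1), X i → X (i + 1)) : Prop :=
  ∃ U : Set (X 0), U.ncard = N ∧
    (∃ m : ℕ, ∀ m' ≥ m, Set.range ((comp f)^[m']) = U) ∧
    IsCyclicOn (comp f) U

/- ### step / comp relations -/

lemma sigma_eq_zero : ∀ {p : Σ i, X i} (h : p.1 = 0), p = ⟨0, h ▸ p.2⟩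
  | ⟨a, b⟩, h => Sigma.ext h ((eqRec_heq h b).symm)

lemma comp_spec (f : ∀ i : Fin (k + 1), X i → X (i + 1)) (v : X 0) :
    (step f)^[k + 1] (⟨0, v⟩ : Σ i, X i) = ⟨0, comp f v⟩ :=
  sigma_eq_zero (by rw [step_iterate_fst]; simp)

lemma comp_iterate (f : ∀ i : Fin (k + 1), X i → X (i + 1)) (v : X 0) (m : ℕ) :
    (step f)^[(k + 1) * m] (⟨0, v⟩ : Σ i, X i) = ⟨0, (comp f)^[m] v⟩ := by
  induction m generalizing v with
  | zero => simp
  | succ m ih =>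
    rw [Nat.mul_succ, Function.iterate_add_apply, comp_spec, ih,
      Function.iterate_succ_apply]

/-- layer-0 periodic points of `step f` are the periodic points of `comp f` -/
lemma periodic_layer0 (f : ∀ i : Fin (k + 1), X i → X (i + 1)) (x : X 0) :
    (⟨0, x⟩ : Σ i, X i) ∈ Function.periodicPts (step f) ↔
      x ∈ Function.periodicPts (comp f) := by
  constructor
  · rintro ⟨m, hm, hx⟩
    have hdvd : (k + 1) ∣ m := by
      have h1 : ((step f)^[m] (⟨0, x⟩ : Σ i, X i)).1 = 0 := by
        rw [hx]
      rw [step_iterate_fst] at h1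
      simpa [Fin.natCast_eq_zero] using h1
    obtain ⟨c, rfl⟩ := hdvd
    have hc : 0 < c := by
      rcases c with _ | c
      · simp at hm
      · omega
    have h3 : (⟨0, (comp f)^[c] x⟩ : Σ i, X i) = ⟨0, x⟩ := by
      rw [← comp_iterate]; exact hx
    exact ⟨c, hc, eq_of_heq (Sigma.mk.inj_iff.mp h3).2⟩
  · rintro ⟨c, hc, hx⟩
    refine ⟨(k + 1) * c, Nat.mul_pos (by omega) hc, ?_⟩
    show (step f)^[(k + 1) * c] _ = _
    rw [comp_iterate, show (comp f)^[c] x = x from hx]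

/- ### eventual image stabilization -/

section Stab

variable {α : Type u} [Fintype α] (g : α → α)

lemma periodicPts_subset_range (m : ℕ) :
    Function.periodicPts g ⊆ Set.range g^[m] := by
  rintro x ⟨p, hp, hx⟩
  have h : g^[m * p] x = x := hx.const_mul m
  refine ⟨g^[m * p - m] x, ?_⟩
  rw [← Function.iterate_add_apply]
  have : m + (m * p - m) = m * p := by
    have : m ≤ m * p := Nat.le_mul_of_pos_right m hp
    omega
  rw [this, h]

lemma range_iterate_subset_periodicPts {m : ℕ} (hm : Fintype.card α ≤ m) :
    Set.range g^[m] ⊆ Function.periodicPts g := by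
  rintro x ⟨y, rfl⟩
  obtain ⟨i, j, hij, hmap⟩ := Fintype.exists_ne_map_eq_of_card_lt
    (fun t : Fin (Fintype.card α + 1) => g^[(t : ℕ)] y) (by simp)
  wlog hlt : (i : ℕ) < (j : ℕ) generalizing i j
  · exact this j i hij.symm hmap.symm (by omega)
  have hper : g^[(i : ℕ)] y ∈ Function.periodicPts g := by
    refine ⟨(j : ℕ) - (i : ℕ), by omega, ?_⟩
    show g^[(j : ℕ) - (i : ℕ)] (g^[(i : ℕ)] y) = g^[(i : ℕ)] y
    rw [← Function.iterate_add_apply]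
    have : (j : ℕ) - (i : ℕ) + (i : ℕ) = (j : ℕ) := by omega
    rw [this, hmap]
  have hile : (i : ℕ) ≤ m := le_trans (by omega) hm
  have : g^[m] y = g^[m - (i : ℕ)] (g^[(i : ℕ)] y) := by
    rw [← Function.iterate_add_apply]
    congr 1; omega
  rw [this]
  obtain ⟨p, hp, hper⟩ := hper
  exact ⟨p, hp, hper.apply_iterate _⟩

lemma range_iterate_eq_periodicPts {m : ℕ} (hm : Fintype.card α ≤ m) :
    Set.range g^[m] = Function.periodicPts g :=
  le_antisymm (range_iterate_subset_periodicPts g hm) (periodicPts_subset_range g m)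

lemma stabilize_iff (U : Set α) :
    (∃ m : ℕ, ∀ m' ≥ m, Set.range (g^[m']) = U) ↔ U = Function.periodicPts g := by
  constructor
  · rintro ⟨m, hU⟩
    have := hU (max m (Fintype.card α)) (le_max_left _ _)
    rw [← this, range_iterate_eq_periodicPts g (le_max_right _ _)]
  · rintro rfl
    exact ⟨Fintype.card α, fun m' hm' => range_iterate_eq_periodicPts g hm'⟩

end Stab

lemma enc_iff [∀ i, Fintype (X i)] (N : ℕ) (f : ∀ i : Fin (k + 1), X i → X (i + 1)) :
    EventuallyNCyclic N f ↔
      (Function.periodicPts (comp f)).ncard = N ∧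
        IsCyclicOn (comp f) (Function.periodicPts (comp f)) := by
  constructor
  · rintro ⟨U, hcard, hstab, hcyc⟩
    have hU : U = Function.periodicPts (comp f) := (stabilize_iff _ U).mp hstab
    exact ⟨hU ▸ hcard, hU ▸ hcyc⟩
  · rintro ⟨h1, h2⟩
    exact ⟨_, h1, (stabilize_iff _ _).mpr rfl, h2⟩


section OptDyn

variable {γ : Type u}

/-- periodic points of a partial dynamical system presented as a map on `Option`. -/
def OPer (s : Option γ → Option γ) : Set γ := {p | ∃ m, 0 < m ∧ s^[m] (some p) = some p}

variable {s : Option γ → Option γ}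

lemma onone_iterate (hs : s none = none) (m : ℕ) : s^[m] none = none := by
  induction m with
  | zero => rfl
  | succ m ih => rw [Function.iterate_succ_apply, hs, ih]

lemma operiod_mul {p : γ} {m : ℕ} (hp : s^[m] (some p) = some p) (t : ℕ) :
    s^[m * t] (some p) = some p := by
  induction t with
  | zero => rfl
  | succ t ih => rw [Nat.mul_succ, Function.iterate_add_apply, hp, ih]

lemma otraj_defined (hs : s none = none) {p : γ} (hp : p ∈ OPer s) (j : ℕ) :
    ∃ q, s^[j] (some p) = some q := by
  obtain ⟨m, hm, hper⟩ := hp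
  rcases h : s^[j] (some p) with _ | q
  · exfalso
    have h1 : s^[m * (j + 1)] (some p) = some p := operiod_mul hper (j + 1)
    have hle : j + 1 ≤ m * (j + 1) := Nat.le_mul_of_pos_left (j + 1) hm
    have h2 : s^[m * (j + 1)] (some p) = s^[m * (j + 1) - j] (s^[j] (some p)) := by
      rw [← Function.iterate_add_apply]
      congr 1
      omega
    rw [h, onone_iterate hs, h1] at h2
    simp at h2
  · exact ⟨q, rfl⟩

lemma oper_traj (hs : s none = none) {p : γ} (hp : p ∈ OPer s) (j : ℕ) :
    ∃ q ∈ OPer s, s^[j] (some p) = some q := by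
  obtain ⟨m, hm, hper⟩ := hp
  obtain ⟨q, hq⟩ := otraj_defined hs ⟨m, hm, hper⟩ j
  refine ⟨q, ⟨m, hm, ?_⟩, hq⟩
  rw [← hq, ← Function.iterate_add_apply, Nat.add_comm, Function.iterate_add_apply, hper, hq]

lemma oper_step (hs : s none = none) {p : γ} (hp : p ∈ OPer s) :
    ∃ q ∈ OPer s, s (some p) = some q := by
  simpa using oper_traj hs hp 1

lemma oper_surj (hs : s none = none) {q : γ} (hq : q ∈ OPer s) :
    ∃ p ∈ OPer s, s (some p) = some q := by
  obtain ⟨m, hm, hper⟩ := hq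
  obtain ⟨p, hp, htraj⟩ := oper_traj hs ⟨m, hm, hper⟩ (m - 1)
  refine ⟨p, hp, ?_⟩
  have : s^[1] (s^[m - 1] (some q)) = some q := by
    rw [← Function.iterate_add_apply, show 1 + (m - 1) = m by omega, hper]
  rw [htraj] at this
  simpa using this

lemma oper_inj {p q : γ} (hp : p ∈ OPer s) (hq : q ∈ OPer s)
    (h : s (some p) = s (some q)) : p = q := by
  obtain ⟨m₁, hm₁, hper₁⟩ := hp
  obtain ⟨m₂, hm₂, hper₂⟩ := hq
  have hP : s^[m₁ * m₂] (some p) = some p := operiod_mul hper₁ m₂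
  have hQ : s^[m₁ * m₂] (some q) = some q := by
    rw [Nat.mul_comm]; exact operiod_mul hper₂ m₁
  have hM : 0 < m₁ * m₂ := Nat.mul_pos hm₁ hm₂
  have : some p = some q := by
    calc some p = s^[m₁ * m₂] (some p) := hP.symm
    _ = s^[m₁ * m₂ - 1] (s (some p)) := by
        conv_lhs => rw [show m₁ * m₂ = (m₁ * m₂ - 1) + 1 by omega]
        rw [Function.iterate_succ_apply]
    _ = s^[m₁ * m₂ - 1] (s (some q)) := by rw [h]
    _ = s^[m₁ * m₂] (some q) := by
        conv_rhs => rw [show m₁ * m₂ = (m₁ * m₂ - 1) + 1 by omega]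
        rw [Function.iterate_succ_apply]
    _ = some q := hQ
  exact Option.some_injective _ this

lemma iterate_injective_periodic {β : Type*} [Finite β] (τ : β → β)
    (hτ : Function.Injective τ) (x : β) : ∃ m, 0 < m ∧ τ^[m] x = x := by
  have hbij : Function.Bijective τ := Finite.injective_iff_bijective.mp hτ
  let σ := Equiv.ofBijective τ hbij
  refine ⟨orderOf σ, orderOf_pos σ, ?_⟩
  have h1 : σ ^ orderOf σ = 1 := pow_orderOf_eq_one σ
  have h2 : (⇑σ)^[orderOf σ] x = x := by
    rw [Equiv.Perm.iterate_eq_pow, h1]; rfl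
  exact h2

lemma oper_of_invariant [Finite γ] {W : Set γ}
    (hfwd : ∀ p ∈ W, ∃ q ∈ W, s (some p) = some q)
    (hinj : ∀ p ∈ W, ∀ q ∈ W, s (some p) = s (some q) → p = q) : W ⊆ OPer s := by
  intro p hp
  let τ : ↥W → ↥W := fun x => ⟨(hfwd x.1 x.2).choose, (hfwd x.1 x.2).choose_spec.1⟩
  have hτs : ∀ x : ↥W, s (some x.1) = some (τ x).1 := fun x => (hfwd x.1 x.2).choose_spec.2
  have hτinj : Function.Injective τ := by
    intro x y hxy
    apply Subtype.ext
    apply hinj x.1 x.2 y.1 y.2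
    rw [hτs x, hτs y, hxy]
  have hiter : ∀ (m : ℕ) (x : ↥W), s^[m] (some x.1) = some (τ^[m] x).1 := by
    intro m
    induction m with
    | zero => intro x; rfl
    | succ m ih =>
      intro x
      rw [Function.iterate_succ_apply, Function.iterate_succ_apply, hτs x, ih (τ x)]
  obtain ⟨m, hm, hmx⟩ := iterate_injective_periodic τ hτinj ⟨p, hp⟩
  exact ⟨m, hm, by rw [hiter m ⟨p, hp⟩, hmx]⟩

lemma invariant_traj (hs : s none = none) {V : Set γ}
    (hV : ∀ p ∈ V, ∀ q, s (some p) = some q → q ∈ V) {p : γ} (hp : p ∈ V) :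
    ∀ {j : ℕ} {q : γ}, s^[j] (some p) = some q → q ∈ V := by
  intro j
  induction j generalizing p with
  | zero =>
    intro q h
    have h' : p = q := Option.some_injective _ h
    exact h' ▸ hp
  | succ j ih =>
    intro q h
    rw [Function.iterate_succ_apply] at h
    rcases h1 : s (some p) with _ | p₁
    · rw [h1, onone_iterate hs] at h
      simp at h
    · rw [h1] at h
      exact ih (hV p hp p₁ h1) h

lemma oper_avoid (hs : s none = none) {V : Set γ}
    (hV : ∀ p ∈ V, ∀ q, s (some p) = some q → q ∈ V)
    {p : γ} (hp : p ∈ OPer s) (hpV : p ∉ V) (j : ℕ) :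
    ∃ q ∈ OPer s, q ∉ V ∧ s^[j] (some p) = some q := by
  obtain ⟨q, hq, htraj⟩ := oper_traj hs hp j
  refine ⟨q, hq, ?_, htraj⟩
  intro hqV
  apply hpV
  obtain ⟨m, hm, hper⟩ := hp
  have h1 : s^[m * j + m - j] (s^[j] (some p)) = some p := by
    rw [← Function.iterate_add_apply, show m * j + m - j + j = m * j + m by
      have : j ≤ m * j := Nat.le_mul_of_pos_left j hm
      omega]
    rw [show m * j + m = m * (j + 1) by ring]
    exact operiod_mul hper (j + 1)
  rw [htraj] at h1
  exact invariant_traj hs hV hqV h1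

end OptDyn


section Layer

variable {k : ℕ}

/-- tuples of maps for a layered partial system: `A` are "active" points, `B` "graveyard". -/
def Tup (A B : Fin (k + 1) → Type u) : Type u :=
  ∀ i : Fin (k + 1), A i → (A (i + 1) ⊕ B (i + 1))

def pstep {A B : Fin (k + 1) → Type u} (h : Tup A B) :
    Option (Σ i, A i) → Option (Σ i, A i)
  | none => none
  | some ⟨i, x⟩ => match h i x with
    | Sum.inl a => some ⟨i + 1, a⟩
    | Sum.inr _ => none

variable {A B : Fin (k + 1) → Type u}

lemma pstep_none (h : Tup A B) : pstep h none = none := rfl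

lemma pstep_some_inl (h : Tup A B) {i : Fin (k + 1)} {x : A i} {a : A (i + 1)}
    (hx : h i x = Sum.inl a) : pstep h (some ⟨i, x⟩) = some ⟨i + 1, a⟩ := by
  show (match h i x with
    | Sum.inl a => some (⟨i + 1, a⟩ : Σ i, A i)
    | Sum.inr _ => none) = _
  rw [hx]

lemma pstep_eq_some (h : Tup A B) {i : Fin (k + 1)} {x : A i} {q : Σ i, A i} :
    pstep h (some ⟨i, x⟩) = some q ↔ ∃ a, h i x = Sum.inl a ∧ q = ⟨i + 1, a⟩ := by
  constructor
  · intro hq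
    rcases hx : h i x with a | b
    · exact ⟨a, rfl, by rw [pstep_some_inl h hx] at hq; exact (Option.some_injective _ hq).symm⟩
    · exfalso
      have : pstep h (some ⟨i, x⟩) = none := by
        show (match h i x with
          | Sum.inl a => some (⟨i + 1, a⟩ : Σ i, A i)
          | Sum.inr _ => none) = _
        rw [hx]
      rw [this] at hq; simp at hq
  · rintro ⟨a, ha, rfl⟩
    exact pstep_some_inl h ha

lemma sigma_mk_eq_iff {i : Fin (k + 1)} {a b : A i} :
    (⟨i, a⟩ : Σ i, A i) = ⟨i, b⟩ ↔ a = b := by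
  constructor
  · intro h; exact eq_of_heq (Sigma.mk.inj_iff.mp h).2
  · rintro rfl; rfl

end Layer

section Slice

attribute [local instance] Classical.propDecidable

variable {k : ℕ} {A B : Fin (k + 1) → Type u}

def sigU (U : ∀ i, Set (A i)) : Set (Σ i, A i) := {p | p.2 ∈ U p.1}

variable (U : ∀ i, Set (A i))

noncomputable def Esplit (i : Fin (k + 1)) : (A i ⊕ B i) → (↥(U i)ᶜ ⊕ (↥(U i) ⊕ B i))
  | Sum.inl a => if ha : a ∈ U i then Sum.inr (Sum.inl ⟨a, ha⟩) else Sum.inl ⟨a, ha⟩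
  | Sum.inr b => Sum.inr (Sum.inr b)

def Eglue (i : Fin (k + 1)) : (↥(U i)ᶜ ⊕ (↥(U i) ⊕ B i)) → (A i ⊕ B i)
  | Sum.inl x => Sum.inl x.1
  | Sum.inr (Sum.inl v) => Sum.inl v.1
  | Sum.inr (Sum.inr b) => Sum.inr b

lemma Eglue_Esplit (i : Fin (k + 1)) (y : A i ⊕ B i) : Eglue U i (Esplit U i y) = y := by
  rcases y with a | b
  · by_cases ha : a ∈ U i <;> simp [Esplit, Eglue, ha]
  · rfl

lemma Esplit_Eglue (i : Fin (k + 1)) (z : ↥(U i)ᶜ ⊕ (↥(U i) ⊕ B i)) :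
    Esplit U i (Eglue U i z) = z := by
  rcases z with x | (v | b)
  · have hx : x.1 ∉ U i := x.2
    simp [Esplit, Eglue, hx]
  · have hv : v.1 ∈ U i := v.2
    simp [Esplit, Eglue, hv]
  · rfl

variable {U}

def Compat (h : Tup A B) (b : ∀ i, ↥(U i) → ↥(U (i + 1)))
    (h' : Tup (fun i => ↥(U i)ᶜ) (fun i => ↥(U i) ⊕ B i)) : Prop :=
  (∀ (i : Fin (k + 1)) (u : ↥(U i)), h i u.1 = Sum.inl (b i u).1) ∧
  (∀ (i : Fin (k + 1)) (x : ↥(U i)ᶜ), h i x.1 = Eglue U (i + 1) (h' i x))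

variable {h : Tup A B} {b : ∀ i, ↥(U i) → ↥(U (i + 1))}
  {h' : Tup (fun i => ↥(U i)ᶜ) (fun i => ↥(U i) ⊕ B i)}

lemma up_sim (hc : Compat h b h') : ∀ (m : ℕ) (p' q' : Σ i, ↥((U i)ᶜ)),
    (pstep h')^[m] (some p') = some q' →
      (pstep h)^[m] (some ⟨p'.1, p'.2.1⟩) = some ⟨q'.1, q'.2.1⟩ := by
  intro m
  induction m with
  | zero =>
    intro p' q' hq
    have : p' = q' := Option.some_injective _ hq
    subst this; rfl
  | succ m ih =>
    rintro ⟨i, x⟩ q' hq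
    rw [Function.iterate_succ_apply] at hq ⊢
    rcases hmid : pstep h' (some ⟨i, x⟩) with _ | r'
    · rw [hmid] at hq
      rw [show ∀ mm, (pstep h')^[mm] none = none from fun mm => by
        induction mm with
        | zero => rfl
        | succ mm ihh => rw [Function.iterate_succ_apply, pstep_none, ihh]] at hq
      simp at hq
    · rw [hmid] at hq
      obtain ⟨y, hy, rfl⟩ := (pstep_eq_some h').mp hmid
      have hstep : pstep h (some ⟨i, x.1⟩) = some ⟨i + 1, y.1⟩ := by
        apply pstep_some_inl
        rw [hc.2 i x, hy]
        rfl
      rw [hstep]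
      exact ih ⟨i + 1, y⟩ q' hq

lemma down_step (hc : Compat h b h') {i : Fin (k + 1)} (x : ↥(U i)ᶜ) {a : A (i + 1)}
    (ha : h i x.1 = Sum.inl a) (haU : a ∉ U (i + 1)) :
    h' i x = Sum.inl ⟨a, haU⟩ := by
  have hcc := hc.2 i x
  rw [ha] at hcc
  rcases hy : h' i x with y | (v | bb)
  · rw [hy] at hcc
    have : a = y.1 := Sum.inl.inj hcc
    cases y with | mk yv yp =>
      cases this
      rfl
  · rw [hy] at hcc
    have : a = v.1 := Sum.inl.inj hcc
    exact absurd (this ▸ v.2) haU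
  · rw [hy] at hcc
    exact absurd hcc (by simp [Eglue])

lemma sigU_invariant (hc : Compat h b h') :
    ∀ p ∈ sigU U, ∀ q, pstep h (some p) = some q → q ∈ sigU U := by
  rintro ⟨i, xp⟩ hp q hq
  have hstep : pstep h (some ⟨i, xp⟩) = some ⟨i + 1, (b i ⟨xp, hp⟩).1⟩ :=
    pstep_some_inl h (hc.1 i ⟨xp, hp⟩)
  rw [hstep] at hq
  have : (⟨i + 1, (b i ⟨xp, hp⟩).1⟩ : Σ i, A i) = q := Option.some_injective _ hq
  rw [← this]
  exact (b i ⟨xp, hp⟩).2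

lemma slice_iff [∀ i, Finite (A i)] (hc : Compat h b h') :
    OPer (pstep h) = sigU U ↔
      ((∀ i, Function.Bijective (b i)) ∧ OPer (pstep h') = ∅) := by
  constructor
  · intro hPer
    refine ⟨fun i => ⟨?_, ?_⟩, ?_⟩
    · -- injective
      intro u v huv
      have h1 : pstep h (some ⟨i, u.1⟩) = some ⟨i + 1, (b i u).1⟩ :=
        pstep_some_inl h (hc.1 i u)
      have h2 : pstep h (some ⟨i, v.1⟩) = some ⟨i + 1, (b i v).1⟩ :=
        pstep_some_inl h (hc.1 i v)
      have hmem : (⟨i, u.1⟩ : Σ i, A i) ∈ OPer (pstep h) := by rw [hPer]; exact u.2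
      have hmem2 : (⟨i, v.1⟩ : Σ i, A i) ∈ OPer (pstep h) := by rw [hPer]; exact v.2
      have := oper_inj hmem hmem2 (by rw [h1, h2, huv])
      exact Subtype.ext (sigma_mk_eq_iff.mp this)
    · -- surjective
      intro v
      have hqmem : (⟨i + 1, v.1⟩ : Σ i, A i) ∈ OPer (pstep h) := by rw [hPer]; exact v.2
      obtain ⟨p, hpmem, hpq⟩ := oper_surj (pstep_none h) hqmem
      obtain ⟨j, xp⟩ := p
      have hpU : xp ∈ U j := by rw [hPer] at hpmem; exact hpmem
      obtain ⟨a, hja, hqa⟩ := (pstep_eq_some h).mp hpq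
      have hba : a = (b j ⟨xp, hpU⟩).1 := by
        rw [hc.1 j ⟨xp, hpU⟩] at hja
        exact (Sum.inl.inj hja).symm
      have hfst : j + 1 = i + 1 := by
        have := congrArg Sigma.fst hqa
        exact this.symm
      have hji : j = i := by
        have := add_right_cancel hfst
        exact this
      subst hji
      have hsnd : a = v.1 := sigma_mk_eq_iff.mp hqa.symm
      exact ⟨⟨xp, hpU⟩, Subtype.ext (by rw [← hba]; exact hsnd)⟩
    · -- no cycles outside
      ext p'
      simp only [Set.mem_empty_iff_false, iff_false]
      rintro ⟨m, hm, hper⟩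
      have := up_sim hc m p' p' hper
      have hmem : (⟨p'.1, p'.2.1⟩ : Σ i, A i) ∈ OPer (pstep h) := ⟨m, hm, this⟩
      rw [hPer] at hmem
      exact p'.2.2 hmem
  · rintro ⟨hbij, hnc⟩
    apply le_antisymm
    · -- OPer ⊆ sigU
      intro p hp
      by_contra hpU
      have hV := sigU_invariant hc
      have key : ∀ (j : ℕ) (q : Σ i, A i), (pstep h)^[j] (some p) = some q →
          ∀ (hqV : q ∉ sigU U),
          (pstep h')^[j] (some ⟨p.1, ⟨p.2, hpU⟩⟩) = some ⟨q.1, ⟨q.2, hqV⟩⟩ := by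
        intro j
        induction j with
        | zero =>
          intro q hq hqV
          have : p = q := Option.some_injective _ hq
          subst this; rfl
        | succ j ih =>
          intro q hq hqV
          rw [Function.iterate_succ_apply'] at hq
          rcases hmid : (pstep h)^[j] (some p) with _ | qj
          · rw [hmid, pstep_none] at hq; simp at hq
          · rw [hmid] at hq
            obtain ⟨qq, _, hqqV, hqq⟩ := oper_avoid (pstep_none h) hV hp hpU j
            have hqjqq : qj = qq := Option.some_injective _ (hmid.symm.trans hqq)
            subst hqjqq
            obtain ⟨i, xq⟩ := qj
            obtain ⟨a, hja, rfl⟩ := (pstep_eq_some h).mp hq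
            have haU : a ∉ U (i + 1) := hqV
            have hstep' : pstep h' (some ⟨i, ⟨xq, hqqV⟩⟩) = some ⟨i + 1, ⟨a, haU⟩⟩ :=
              pstep_some_inl h' (down_step hc ⟨xq, hqqV⟩ hja haU)
            rw [Function.iterate_succ_apply', ih ⟨i, xq⟩ hmid hqqV]
            exact hstep'
      obtain ⟨m, hm, hper⟩ := hp
      have := key m p hper hpU
      have hmem : (⟨p.1, ⟨p.2, hpU⟩⟩ : Σ i, ↥((U i)ᶜ)) ∈ OPer (pstep h') := ⟨m, hm, this⟩
      rw [hnc] at hmem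
      exact hmem
    · -- sigU ⊆ OPer
      apply oper_of_invariant
      · rintro ⟨i, xp⟩ hp
        exact ⟨⟨i + 1, (b i ⟨xp, hp⟩).1⟩, (b i ⟨xp, hp⟩).2,
          pstep_some_inl h (hc.1 i ⟨xp, hp⟩)⟩
      · rintro ⟨i, xp⟩ hp ⟨j, xq⟩ hq hpq
        rw [pstep_some_inl h (hc.1 i ⟨xp, hp⟩), pstep_some_inl h (hc.1 j ⟨xq, hq⟩)] at hpq
        have hq' : (⟨i + 1, (b i ⟨xp, hp⟩).1⟩ : Σ i, A i) = ⟨j + 1, (b j ⟨xq, hq⟩).1⟩ :=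
          Option.some_injective _ hpq
        have hfst : i + 1 = j + 1 := congrArg Sigma.fst hq'
        have hij : i = j := add_right_cancel hfst
        subst hij
        have hsnd : (b i ⟨xp, hp⟩).1 = (b i ⟨xq, hq⟩).1 := sigma_mk_eq_iff.mp hq'
        have : (⟨xp, hp⟩ : ↥(U i)) = ⟨xq, hq⟩ := (hbij i).1 (Subtype.ext hsnd)
        have := congrArg Subtype.val this
        simp at this
        subst this
        rfl

/- the construction of the three components -/

lemma bOf_ex (h : Tup A B) (hPer : OPer (pstep h) = sigU U) (i : Fin (k + 1))
    (u : ↥(U i)) : ∃ v : ↥(U (i + 1)), h i u.1 = Sum.inl v.1 := by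
  have hmem : (⟨i, u.1⟩ : Σ i, A i) ∈ OPer (pstep h) := by rw [hPer]; exact u.2
  obtain ⟨q, hqmem, hq⟩ := oper_step (pstep_none h) hmem
  obtain ⟨a, ha, rfl⟩ := (pstep_eq_some h).mp hq
  rw [hPer] at hqmem
  exact ⟨⟨a, hqmem⟩, ha⟩

noncomputable def bOf (h : Tup A B) (hPer : OPer (pstep h) = sigU U) :
    ∀ i, ↥(U i) → ↥(U (i + 1)) := fun i u => (bOf_ex h hPer i u).choose

lemma bOf_spec (h : Tup A B) (hPer : OPer (pstep h) = sigU U) (i : Fin (k + 1))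
    (u : ↥(U i)) : h i u.1 = Sum.inl ((bOf h hPer i u) : A (i + 1)) :=
  (bOf_ex h hPer i u).choose_spec

lemma bOf_eq (h : Tup A B) (hPer : OPer (pstep h) = sigU U)
    (b : ∀ i, ↥(U i) → ↥(U (i + 1)))
    (hb' : ∀ i u, h i u.1 = Sum.inl ((b i u) : A (i + 1))) : bOf h hPer = b := by
  funext i u
  apply Subtype.ext
  have h1 := bOf_spec h hPer i u
  rw [hb' i u] at h1
  exact (Sum.inl.inj h1).symm

noncomputable def h'Of (h : Tup A B) : Tup (fun i => ↥(U i)ᶜ) (fun i => ↥(U i) ⊕ B i) :=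
  fun i x => Esplit U (i + 1) (h i x.1)

noncomputable def glueOf (b : ∀ i, ↥(U i) → ↥(U (i + 1)))
    (h' : Tup (fun i => ↥(U i)ᶜ) (fun i => ↥(U i) ⊕ B i)) : Tup A B :=
  fun i x => if hx : x ∈ U i then Sum.inl (b i ⟨x, hx⟩).1
    else Eglue U (i + 1) (h' i ⟨x, hx⟩)

lemma compat_ofPer (h : Tup A B) (hPer : OPer (pstep h) = sigU U) :
    Compat h (bOf h hPer) (h'Of h) := by
  constructor
  · exact fun i u => bOf_spec h hPer i u
  · intro i x
    show h i x.1 = Eglue U (i + 1) (Esplit U (i + 1) (h i x.1))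
    rw [Eglue_Esplit]

lemma compat_glue (b : ∀ i, ↥(U i) → ↥(U (i + 1)))
    (h' : Tup (fun i => ↥(U i)ᶜ) (fun i => ↥(U i) ⊕ B i)) :
    Compat (glueOf b h') b h' := by
  constructor
  · intro i u
    show (if hx : u.1 ∈ U i then _ else _) = _
    rw [dif_pos u.2]
  · intro i x
    show (if hx : x.1 ∈ U i then _ else _) = _
    rw [dif_neg x.2]

noncomputable def sliceEquiv [∀ i, Finite (A i)] (U : ∀ i, Set (A i)) :
    {h : Tup A B // OPer (pstep h) = sigU U} ≃
      ({b : ∀ i, ↥(U i) → ↥(U (i + 1)) // ∀ i, Function.Bijective (b i)} ×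
       {h' : Tup (fun i => ↥(U i)ᶜ) (fun i => ↥(U i) ⊕ B i) // OPer (pstep h') = ∅}) where
  toFun h := ⟨⟨bOf h.1 h.2, ((slice_iff (compat_ofPer h.1 h.2)).mp h.2).1⟩,
    ⟨h'Of h.1, ((slice_iff (compat_ofPer h.1 h.2)).mp h.2).2⟩⟩
  invFun bh := ⟨glueOf bh.1.1 bh.2.1,
    (slice_iff (compat_glue bh.1.1 bh.2.1)).mpr ⟨bh.1.2, bh.2.2⟩⟩
  left_inv := by
    rintro ⟨h, hPer⟩
    apply Subtype.ext
    funext i x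
    show glueOf (bOf h hPer) (h'Of h) i x = h i x
    unfold glueOf
    by_cases hx : x ∈ U i
    · rw [dif_pos hx]
      exact (bOf_spec h hPer i ⟨x, hx⟩).symm
    · rw [dif_neg hx]
      show Eglue U (i + 1) (Esplit U (i + 1) (h i x)) = h i x
      rw [Eglue_Esplit]
  right_inv := by
    rintro ⟨⟨b, hb⟩, ⟨h', hn⟩⟩
    have hcompat := compat_glue b h'
    refine Prod.ext ?_ ?_
    · apply Subtype.ext
      exact bOf_eq (glueOf b h') ((slice_iff hcompat).mpr ⟨hb, hn⟩) b
        (fun i u => hcompat.1 i u)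
    · apply Subtype.ext
      funext i x
      show Esplit U (i + 1) (glueOf b h' i x.1) = h' i x
      rw [hcompat.2 i x, Esplit_Eglue]

end Slice


section CycCount

attribute [local instance] Classical.propDecidable

variable {α : Type u} [Fintype α] {M : ℕ}

lemma conj_iterate {β : Type*} (e : β ≃ α) (r : β → β) (j : ℕ) (x : α) :
    (⇑e ∘ r ∘ ⇑e.symm)^[j] x = e (r^[j] (e.symm x)) := by
  induction j generalizing x with
  | zero => simp
  | succ j ih =>
    rw [Function.iterate_succ_apply, Function.iterate_succ_apply]
    rw [show (⇑e ∘ r ∘ ⇑e.symm) x = e (r (e.symm x)) from rfl, ih]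
    simp

open Fin.NatCast Fin.CommRing in
lemma finRotate_iterate (M : ℕ) (a : Fin (M + 1)) (m : ℕ) :
    (⇑(finRotate (M + 1)))^[m] a = a + (m : Fin (M + 1)) := by
  induction m with
  | zero => simp
  | succ m ih =>
    rw [Function.iterate_succ_apply', ih, finRotate_succ_apply]
    push_cast; ring

lemma orbit_bijective {g : α → α} (hg : IsCyclicOn g Set.univ)
    (hM : Fintype.card α = M + 1) (x₀ : α) :
    Function.Bijective (fun j : Fin (M + 1) => g^[(j : ℕ)] x₀) := by
  have hginj : Function.Injective g := (Set.bijOn_univ.mp hg.1).injective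
  rw [Fintype.bijective_iff_injective_and_card]
  refine ⟨?_, by simp [hM]⟩
  have key : ∀ i j : Fin (M + 1), (i : ℕ) < (j : ℕ) →
      g^[(i : ℕ)] x₀ = g^[(j : ℕ)] x₀ → False := by
    intro i j hlt hij
    set d := (j : ℕ) - (i : ℕ) with hd
    have hdpos : 0 < d := by omega
    have hdlt : d < M + 1 := by omega
    have hdx : g^[d] x₀ = x₀ := by
      have h1 : g^[(i : ℕ)] (g^[d] x₀) = g^[(i : ℕ)] x₀ := by
        rw [← Function.iterate_add_apply, show (i : ℕ) + d = (j : ℕ) by omega]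
        exact hij.symm
      exact (hginj.iterate (i : ℕ)) h1
    have hsurj : Function.Surjective (fun t : Fin d => g^[(t : ℕ)] x₀) := by
      intro y
      obtain ⟨t, ht⟩ := hg.2 x₀ trivial y trivial
      refine ⟨⟨t % d, Nat.mod_lt _ hdpos⟩, ?_⟩
      show g^[t % d] x₀ = y
      rw [Function.IsPeriodicPt.iterate_mod_apply hdx t, ht]
    have := Fintype.card_le_of_surjective _ hsurj
    simp [hM] at this
    omega
  intro i j hij
  have hij' : g^[(i : ℕ)] x₀ = g^[(j : ℕ)] x₀ := hij
  by_contra hne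
  have hnev : (i : ℕ) ≠ (j : ℕ) := fun h => hne (Fin.ext h)
  rcases lt_or_gt_of_ne hnev with h | h
  · exact key i j h hij'
  · exact key j i h hij'.symm

lemma orbit_period {g : α → α} (hg : IsCyclicOn g Set.univ)
    (hM : Fintype.card α = M + 1) (x₀ : α) : g^[M + 1] x₀ = x₀ := by
  have hginj : Function.Injective g := (Set.bijOn_univ.mp hg.1).injective
  obtain ⟨t, ht⟩ := (orbit_bijective hg hM x₀).surjective (g^[M + 1] x₀)
  have ht' : g^[(t : ℕ)] x₀ = g^[M + 1] x₀ := ht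
  rcases Nat.eq_zero_or_pos (t : ℕ) with h0 | hpos
  · rw [h0] at ht'; simpa using ht'.symm
  · exfalso
    have hdx : g^[M + 1 - (t : ℕ)] x₀ = x₀ := by
      have h1 : g^[(t : ℕ)] (g^[M + 1 - (t : ℕ)] x₀) = g^[(t : ℕ)] x₀ := by
        rw [← Function.iterate_add_apply,
          show (t : ℕ) + (M + 1 - (t : ℕ)) = M + 1 by omega, ht']
      exact (hginj.iterate (t : ℕ)) h1
    have h2 := (orbit_bijective hg hM x₀).injective
      (a₁ := ⟨M + 1 - (t : ℕ), by omega⟩) (a₂ := ⟨0, by omega⟩)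
      (by show g^[M + 1 - (t : ℕ)] x₀ = g^[(0 : ℕ)] x₀; simpa using hdx)
    have h3 := congrArg Fin.val h2
    simp at h3
    omega

open Fin.NatCast Fin.CommRing in
noncomputable def cycEquiv {g : α → α}
    (hM : Fintype.card α = M + 1) (x₀ : α) :
    {σ : Equiv.Perm α // IsCyclicOn ⇑σ Set.univ} ≃ {e : Fin (M + 1) ≃ α // e 0 = x₀} where
  toFun σ := ⟨Equiv.ofBijective _ (orbit_bijective σ.2 hM x₀), by simp⟩
  invFun e := ⟨(e.1.symm.trans (finRotate (M + 1))).trans e.1, by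
    constructor
    · exact Set.bijOn_univ.mpr (Equiv.bijective _)
    · intro x _ y _
      refine ⟨((e.1.symm y - e.1.symm x : Fin (M + 1)) : Fin (M + 1)).val, ?_⟩
      have hc : ⇑((e.1.symm.trans (finRotate (M + 1))).trans e.1) =
          ⇑e.1 ∘ ⇑(finRotate (M + 1)) ∘ ⇑e.1.symm := by
        ext z; simp
      rw [hc, conj_iterate, finRotate_iterate, Fin.cast_val_eq_self]
      rw [show e.1.symm x + (e.1.symm y - e.1.symm x) = e.1.symm y by ring]
      simp⟩
  left_inv := by
    rintro ⟨σ, hσ⟩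
    apply Subtype.ext
    apply Equiv.ext
    intro x
    set u := fun j : Fin (M + 1) => (⇑σ)^[(j : ℕ)] x₀ with hu
    set e := Equiv.ofBijective u (orbit_bijective hσ hM x₀) with he
    show e (finRotate (M + 1) (e.symm x)) = σ x
    obtain ⟨j, rfl⟩ := e.surjective x
    rw [Equiv.symm_apply_apply]
    have hej : e j = u j := rfl
    rw [show finRotate (M + 1) j = j + 1 from finRotate_succ_apply j]
    have hval : ((j + 1 : Fin (M + 1)) : ℕ) = if j = Fin.last M then 0 else (j : ℕ) + 1 :=
      Fin.val_add_one j
    by_cases hlast : j = Fin.last M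
    · have : e (j + 1) = x₀ := by
        show u (j + 1) = x₀
        simp only [hu, hval, hlast, if_true]
        simp
      rw [this, hej]
      show x₀ = σ (u j)
      simp only [hu, hlast]
      simp only [Fin.val_last]
      rw [show (⇑σ) ((⇑σ)^[M] x₀) = (⇑σ)^[M + 1] x₀ from
        (Function.iterate_succ_apply' (⇑σ) M x₀).symm]
      exact (orbit_period hσ hM x₀).symm
    · show u (j + 1) = σ (u j)
      simp only [hu, hval, hlast, if_false]
      rw [Function.iterate_succ_apply']
  right_inv := by
    rintro ⟨e, he⟩
    apply Subtype.ext
    apply Equiv.ext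
    intro j
    show (⇑((e.symm.trans (finRotate (M + 1))).trans e))^[(j : ℕ)] x₀ = e j
    have hc : ⇑((e.symm.trans (finRotate (M + 1))).trans e) =
        ⇑e ∘ ⇑(finRotate (M + 1)) ∘ ⇑e.symm := by ext z; simp
    rw [hc, conj_iterate, finRotate_iterate]
    rw [show e.symm x₀ = 0 from by rw [Equiv.symm_apply_eq, he]]
    rw [zero_add, Fin.cast_val_eq_self]

lemma card_fixed_equiv (hM : Fintype.card α = M + 1) (x₀ : α) :
    Nat.card {e : Fin (M + 1) ≃ α // e 0 = x₀} = M.factorial := by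
  have hne : Nonempty α := Fintype.card_pos_iff.mp (by omega)
  set s : Set (Fin (M + 1)) := {0} with hs
  set t : Set α := {x₀} with ht
  have e₀ : ↥s ≃ ↥t := Equiv.ofUnique _ _
  have E1 : {e : Fin (M + 1) ≃ α // e 0 = x₀} ≃
      {e : Fin (M + 1) ≃ α // ∀ x : ↥s, e ↑x = ↑(e₀ x)} := by
    refine Equiv.subtypeEquivRight fun e => ?_
    constructor
    · rintro h ⟨x, hx⟩
      have : x = 0 := hx
      subst this
      rw [h]
      have : (e₀ ⟨0, rfl⟩ : α) = x₀ := (e₀ ⟨0, rfl⟩).2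
      exact this.symm
    · intro h
      have := h ⟨0, rfl⟩
      rw [this]
      exact (e₀ ⟨0, rfl⟩).2
  have E2 := Equiv.Set.compl e₀
  rw [Nat.card_congr (E1.trans E2), Nat.card_eq_fintype_card]
  have hcs : Fintype.card ↥sᶜ = M := by
    rw [Fintype.card_compl_set]
    simp [hs]
  have hct : Fintype.card ↥tᶜ = M := by
    rw [Fintype.card_compl_set]
    simp [ht, hM]
  rw [Fintype.card_equiv (Fintype.equivOfCardEq (hcs.trans hct.symm)), hcs]

lemma card_cyclic_perm (hM : Fintype.card α = M + 1) :
    Nat.card {σ : Equiv.Perm α // IsCyclicOn ⇑σ Set.univ} = M.factorial := by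
  have hne : Nonempty α := Fintype.card_pos_iff.mp (by omega)
  obtain ⟨x₀⟩ := hne
  rw [Nat.card_congr (cycEquiv (g := id) hM x₀), card_fixed_equiv hM x₀]

end CycCount


section Transport

variable {k : ℕ} {A B : Fin (k + 1) → Type u} {A' B' : Fin (k + 1) → Type v}

def tupTransport (a : ∀ i, A i ≃ A' i) (β : ∀ i, B i ≃ B' i) : Tup A B ≃ Tup A' B' where
  toFun h := fun i x' => Sum.map (a (i + 1)) (β (i + 1)) (h i ((a i).symm x'))
  invFun h' := fun i x => Sum.map (a (i + 1)).symm (β (i + 1)).symm (h' i (a i x))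
  left_inv h := by
    funext i x
    show Sum.map (⇑(a (i + 1)).symm) (⇑(β (i + 1)).symm)
      (Sum.map (⇑(a (i + 1))) (⇑(β (i + 1))) (h i ((a i).symm ((a i) x)))) = h i x
    rw [Equiv.symm_apply_apply]
    rcases hx : h i x with c | d <;> simp [hx]
  right_inv h' := by
    funext i x'
    show Sum.map (⇑(a (i + 1))) (⇑(β (i + 1)))
      (Sum.map (⇑(a (i + 1)).symm) (⇑(β (i + 1)).symm) (h' i ((a i) ((a i).symm x')))) = h' i x'
    rw [Equiv.apply_symm_apply]
    rcases hx : h' i x' with c | d <;> simp [hx]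

lemma tupTransport_sim (a : ∀ i, A i ≃ A' i) (β : ∀ i, B i ≃ B' i) (h : Tup A B) :
    ∀ (m : ℕ) (p q : Σ i, A i), (pstep h)^[m] (some p) = some q →
      (pstep (tupTransport a β h))^[m] (some ⟨p.1, a p.1 p.2⟩) = some ⟨q.1, a q.1 q.2⟩ := by
  intro m
  induction m with
  | zero =>
    intro p q hq
    have : p = q := Option.some_injective _ hq
    subst this; rfl
  | succ m ih =>
    rintro ⟨i, x⟩ q hq
    rw [Function.iterate_succ_apply] at hq ⊢
    rcases hmid : pstep h (some ⟨i, x⟩) with _ | r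
    · rw [hmid] at hq
      rw [show ∀ mm, (pstep h)^[mm] (none : Option (Σ i, A i)) = none from fun mm => by
        induction mm with
        | zero => rfl
        | succ mm ihh => rw [Function.iterate_succ_apply, pstep_none, ihh]] at hq
      simp at hq
    · rw [hmid] at hq
      obtain ⟨aa, haa, rfl⟩ := (pstep_eq_some h).mp hmid
      have hstep : pstep (tupTransport a β h) (some ⟨i, a i x⟩) =
          some ⟨i + 1, a (i + 1) aa⟩ := by
        apply pstep_some_inl
        show Sum.map (a (i + 1)) (β (i + 1)) (h i ((a i).symm (a i x))) = _
        rw [Equiv.symm_apply_apply, haa]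
        rfl
      rw [hstep]
      exact ih ⟨i + 1, aa⟩ q hq

lemma tupTransport_symm_apply (a : ∀ i, A i ≃ A' i) (β : ∀ i, B i ≃ B' i) (h' : Tup A' B') :
    (tupTransport a β).symm h' =
      tupTransport (fun i => (a i).symm) (fun i => (β i).symm) h' := by
  funext i x
  show Sum.map (a (i + 1)).symm (β (i + 1)).symm (h' i (a i x)) =
    Sum.map (a (i + 1)).symm (β (i + 1)).symm (h' i (((a i).symm).symm x))
  rw [Equiv.symm_symm]

lemma nocyc_transport_forward (a : ∀ i, A i ≃ A' i) (β : ∀ i, B i ≃ B' i) (h : Tup A B)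
    (hne : (OPer (pstep h)).Nonempty) : (OPer (pstep (tupTransport a β h))).Nonempty := by
  obtain ⟨p, m, hm, hper⟩ := hne
  exact ⟨⟨p.1, a p.1 p.2⟩, m, hm, tupTransport_sim a β h m p p hper⟩

lemma nocyc_transport_iff (a : ∀ i, A i ≃ A' i) (β : ∀ i, B i ≃ B' i) (h : Tup A B) :
    OPer (pstep h) = ∅ ↔ OPer (pstep (tupTransport a β h)) = ∅ := by
  constructor
  · intro h0
    by_contra hne
    obtain ⟨p', hp'⟩ := Set.nonempty_iff_ne_empty.mpr hne
    have h1 := nocyc_transport_forward (fun i => (a i).symm) (fun i => (β i).symm)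
      (tupTransport a β h) ⟨p', hp'⟩
    rw [← tupTransport_symm_apply, Equiv.symm_apply_apply] at h1
    obtain ⟨q, hq⟩ := h1
    rw [h0] at hq
    exact hq
  · intro h0
    by_contra hne
    obtain ⟨p, hp⟩ := Set.nonempty_iff_ne_empty.mpr hne
    obtain ⟨q, hq⟩ := nocyc_transport_forward a β h ⟨p, hp⟩
    rw [h0] at hq
    exact hq

lemma nocyc_card_transport (a : ∀ i, A i ≃ A' i) (β : ∀ i, B i ≃ B' i) :
    Nat.card {h : Tup A B // OPer (pstep h) = ∅} =
      Nat.card {h' : Tup A' B' // OPer (pstep h') = ∅} :=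
  Nat.card_congr (Equiv.subtypeEquiv (tupTransport a β)
    (fun h => nocyc_transport_iff a β h))

end Transport

section SmallCounts

attribute [local instance] Classical.propDecidable

noncomputable def bijFunEquiv {α : Type u} {β : Type v} :
    {g : α → β // Function.Bijective g} ≃ (α ≃ β) where
  toFun g := Equiv.ofBijective g.1 g.2
  invFun e := ⟨e, e.bijective⟩
  left_inv g := Subtype.ext rfl
  right_inv e := Equiv.ext fun x => rfl

lemma card_bij_subtype {α : Type u} {β : Type v} [Fintype α] [Fintype β]
    (h : Fintype.card α = Fintype.card β) :
    Nat.card {g : α → β // Function.Bijective g} = (Fintype.card α).factorial := by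
  rw [Nat.card_congr bijFunEquiv, Nat.card_eq_fintype_card,
    Fintype.card_equiv (Fintype.equivOfCardEq h)]

lemma card_bij_subtype_ne {α : Type u} {β : Type v} [Fintype α] [Fintype β]
    (h : Fintype.card α ≠ Fintype.card β) :
    Nat.card {g : α → β // Function.Bijective g} = 0 := by
  rw [Nat.card_eq_zero]
  left
  constructor
  rintro ⟨g, hg⟩
  exact h (Fintype.card_of_bijective hg)

open Fin.NatCast Fin.CommRing in
lemma fin_cyclic_const {k : ℕ} {c : Fin (k + 1) → ℕ} (h : ∀ i, c i = c (i + 1)) (i : Fin (k + 1)) :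
    c i = c 0 := by
  have key : ∀ m : ℕ, c ((m : Fin (k + 1))) = c 0 := by
    intro m
    induction m with
    | zero => rfl
    | succ m ih =>
      have : ((m + 1 : ℕ) : Fin (k + 1)) = ((m : ℕ) : Fin (k + 1)) + 1 := by push_cast; ring
      rw [this, ← h ((m : ℕ) : Fin (k + 1)), ih]
  have := key (i : ℕ)
  rwa [Fin.cast_val_eq_self] at this

lemma card_ncard_subtype {α : Type u} [Fintype α] (a : ℕ) :
    Nat.card {S : Set α // S.ncard = a} = (Fintype.card α).choose a := by
  have e : {S : Set α // S.ncard = a} ≃ {s : Finset α // s.card = a} :=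
    Equiv.subtypeEquiv (Fintype.finsetEquivSet (α := α)).symm fun S => by
      rw [show ((Fintype.finsetEquivSet (α := α)).symm S) = S.toFinset from rfl,
        Set.ncard_eq_toFinset_card' S]
  rw [Nat.card_congr e, Nat.card_eq_fintype_card, Fintype.card_finset_len]

end SmallCounts

section Master

attribute [local instance] Classical.propDecidable

noncomputable def NC (k n r : ℕ) : ℕ :=
  Nat.card {h : Tup (fun _ : Fin (k + 1) => Fin r) (fun _ : Fin (k + 1) => Fin (n - r)) //
    OPer (pstep h) = ∅}

lemma NC_eq {k n r : ℕ} {A B : Fin (k + 1) → Type u} [∀ i, Fintype (A i)] [∀ i, Fintype (B i)]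
    (hA : ∀ i, Fintype.card (A i) = r) (hB : ∀ i, Fintype.card (B i) = n - r) :
    Nat.card {h : Tup A B // OPer (pstep h) = ∅} = NC k n r :=
  nocyc_card_transport (fun i => Fintype.equivFinOfCardEq (hA i))
    (fun i => Fintype.equivFinOfCardEq (hB i))

lemma ncard_eq_card_coe {α : Type u} (S : Set α) [Fintype ↥S] :
    S.ncard = Fintype.card ↥S := by
  rw [← Nat.card_eq_fintype_card, Nat.card_coe_set_eq]

lemma fiber_card {k n r a : ℕ} {A B : Fin (k + 1) → Type u}
    [∀ i, Fintype (A i)] [∀ i, Fintype (B i)]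
    (hrn : r ≤ n) (ha : a ≤ r)
    (hA : ∀ i, Fintype.card (A i) = r) (hB : ∀ i, Fintype.card (B i) = n - r)
    (U : ∀ i, Set (A i)) (hU : ∀ i, (U i).ncard = a) :
    Nat.card {h : Tup A B // OPer (pstep h) = sigU U} =
      a.factorial ^ (k + 1) * NC k n (r - a) := by
  have hcard : ∀ i, Fintype.card ↥(U i) = a := fun i => by
    rw [← ncard_eq_card_coe, hU]
  rw [Nat.card_congr (sliceEquiv U), Nat.card_prod]
  congr 1
  · rw [Nat.card_congr (Equiv.subtypePiEquivPi
      (p := fun i (g : ↥(U i) → ↥(U (i + 1))) => Function.Bijective g)), Nat.card_pi]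
    calc ∏ i, Nat.card {g : ↥(U i) → ↥(U (i + 1)) // Function.Bijective g}
        = ∏ _i : Fin (k + 1), a.factorial := by
          refine Finset.prod_congr rfl fun i _ => ?_
          rw [card_bij_subtype (by rw [hcard i, hcard (i + 1)]), hcard i]
      _ = a.factorial ^ (k + 1) := by
          rw [Finset.prod_const, Finset.card_univ, Fintype.card_fin]
  · refine NC_eq (fun i => ?_) (fun i => ?_)
    · rw [Fintype.card_compl_set, hcard i, hA i]
    · rw [Fintype.card_sum, hcard i, hB i]
      omega

lemma fiber_card_zero {k : ℕ} {A B : Fin (k + 1) → Type u}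
    [∀ i, Fintype (A i)] [∀ i, Fintype (B i)]
    (U : ∀ i, Set (A i)) (hU : ¬ ∀ i, (U i).ncard = (U 0).ncard) :
    Nat.card {h : Tup A B // OPer (pstep h) = sigU U} = 0 := by
  rw [Nat.card_congr (sliceEquiv U), Nat.card_prod]
  have hzero : Nat.card {b : ∀ i, ↥(U i) → ↥(U (i + 1)) // ∀ i, Function.Bijective (b i)} = 0 := by
    rw [Nat.card_eq_zero]
    left
    constructor
    rintro ⟨b, hb⟩
    apply hU
    have hstep : ∀ j, (U j).ncard = (U (j + 1)).ncard := fun j => by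
      rw [ncard_eq_card_coe, ncard_eq_card_coe]
      exact Fintype.card_of_bijective (hb j)
    exact fun i => fin_cyclic_const hstep i
  rw [hzero, zero_mul]

instance instFiniteTup {k : ℕ} {A B : Fin (k + 1) → Type u} [∀ i, Finite (A i)]
    [∀ i, Finite (B i)] : Finite (Tup A B) := by
  unfold Tup
  infer_instance

def layerOf {k : ℕ} {A B : Fin (k + 1) → Type u} (h : Tup A B) : ∀ i, Set (A i) :=
  fun i => {x | (⟨i, x⟩ : Σ i, A i) ∈ OPer (pstep h)}

lemma sigU_layerOf {k : ℕ} {A B : Fin (k + 1) → Type u} (h : Tup A B) :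
    sigU (layerOf h) = OPer (pstep h) := by
  ext ⟨i, x⟩
  rfl

lemma layerOf_eq_iff {k : ℕ} {A B : Fin (k + 1) → Type u} (h : Tup A B) (U : ∀ i, Set (A i)) :
    layerOf h = U ↔ OPer (pstep h) = sigU U := by
  constructor
  · rintro rfl
    exact (sigU_layerOf h).symm
  · intro hP
    funext i
    ext x
    show (⟨i, x⟩ : Σ i, A i) ∈ OPer (pstep h) ↔ x ∈ U i
    rw [hP]
    rfl

lemma nat_card_sigma {ι : Type*} [Fintype ι] (f : ι → Type*) [∀ i, Finite (f i)] :
    Nat.card (Σ i, f i) = ∑ i, Nat.card (f i) := by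
  letI : ∀ i, Fintype (f i) := fun i => Fintype.ofFinite _
  rw [Nat.card_eq_fintype_card, Fintype.card_sigma]
  exact Finset.sum_congr rfl fun i _ => (Nat.card_eq_fintype_card).symm

theorem master {k n r : ℕ} {A B : Fin (k + 1) → Type u}
    [∀ i, Fintype (A i)] [∀ i, Fintype (B i)] (hrn : r ≤ n)
    (hA : ∀ i, Fintype.card (A i) = r) (hB : ∀ i, Fintype.card (B i) = n - r) :
    n ^ ((k + 1) * r) =
      ∑ a ∈ Finset.range (r + 1),
        (r.choose a) ^ (k + 1) * (a.factorial ^ (k + 1) * NC k n (r - a)) := by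
  have htot : Nat.card (Tup A B) = n ^ ((k + 1) * r) := by
    rw [show Tup A B = (∀ i : Fin (k + 1), A i → (A (i + 1) ⊕ B (i + 1))) from rfl,
      Nat.card_pi]
    calc ∏ i, Nat.card (A i → (A (i + 1) ⊕ B (i + 1)))
        = ∏ _i : Fin (k + 1), n ^ r := by
          refine Finset.prod_congr rfl fun i _ => ?_
          rw [Nat.card_eq_fintype_card, Fintype.card_fun, Fintype.card_sum, hA, hA, hB]
          congr 1
          omega
      _ = n ^ ((k + 1) * r) := by
          rw [Finset.prod_const, Finset.card_univ, Fintype.card_fin, ← pow_mul,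
            Nat.mul_comm]
  rw [← htot]
  have e1 : Tup A B ≃ Σ U : ∀ i, Set (A i), {h : Tup A B // layerOf h = U} :=
    (Equiv.sigmaFiberEquiv layerOf).symm
  rw [Nat.card_congr e1, nat_card_sigma]
  have hfib : ∀ U : ∀ i, Set (A i), Nat.card {h : Tup A B // layerOf h = U} =
      ∑ a ∈ Finset.range (r + 1),
        if (∀ i, (U i).ncard = a) then a.factorial ^ (k + 1) * NC k n (r - a) else 0 := by
    intro U
    rw [Nat.card_congr (Equiv.subtypeEquivRight (fun h => layerOf_eq_iff h U))]
    by_cases hall : ∀ i, (U i).ncard = (U 0).ncard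
    · have ha0 : (U 0).ncard ≤ r := by
        have h1 := Set.ncard_le_ncard (Set.subset_univ (U 0)) Set.finite_univ
        rwa [Set.ncard_univ, Nat.card_eq_fintype_card, hA 0] at h1
      rw [fiber_card hrn ha0 hA hB U hall]
      rw [Finset.sum_eq_single ((U 0).ncard)]
      · rw [if_pos hall]
      · intro b _ hb
        rw [if_neg]
        intro hc
        exact hb (hc 0).symm
      · intro hnot
        exact absurd (Finset.mem_range.mpr (by omega)) hnot
    · rw [fiber_card_zero U hall]
      symm
      apply Finset.sum_eq_zero
      intro b _
      rw [if_neg]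
      intro hc
      exact hall fun i => (hc i).trans (hc 0).symm
  rw [Finset.sum_congr rfl (fun U _ => hfib U), Finset.sum_comm]
  refine Finset.sum_congr rfl fun a _ => ?_
  have hcount : (Finset.univ.filter (fun U : ∀ i, Set (A i) => ∀ i, (U i).ncard = a)).card =
      (r.choose a) ^ (k + 1) := by
    rw [← Fintype.card_subtype, ← Nat.card_eq_fintype_card]
    rw [Nat.card_congr (Equiv.subtypePiEquivPi
      (p := fun i (S : Set (A i)) => S.ncard = a)), Nat.card_pi]
    calc ∏ i, Nat.card {S : Set (A i) // S.ncard = a}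
        = ∏ _i : Fin (k + 1), r.choose a := by
          refine Finset.prod_congr rfl fun i _ => ?_
          rw [card_ncard_subtype, hA]
      _ = (r.choose a) ^ (k + 1) := by
          rw [Finset.prod_const, Finset.card_univ, Fintype.card_fin]
  calc ∑ U : ∀ i, Set (A i),
        (if (∀ i, (U i).ncard = a) then a.factorial ^ (k + 1) * NC k n (r - a) else 0)
      = ∑ U ∈ Finset.univ.filter (fun U : ∀ i, Set (A i) => ∀ i, (U i).ncard = a),
          a.factorial ^ (k + 1) * NC k n (r - a) := (Finset.sum_filter _ _).symm
    _ = (r.choose a) ^ (k + 1) * (a.factorial ^ (k + 1) * NC k n (r - a)) := by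
        rw [Finset.sum_const, hcount, smul_eq_mul]

end Master
section Closed

lemma NC_zero (k n : ℕ) : NC k n 0 = 1 := by
  unfold NC
  rw [Nat.card_eq_one_iff_unique]
  constructor
  · constructor
    intro a b
    apply Subtype.ext
    funext i x
    exact x.elim0
  · exact ⟨⟨fun i x => x.elim0, Set.eq_empty_iff_forall_notMem.mpr (fun p _ => p.2.elim0)⟩⟩

lemma NC_closed {k n : ℕ} : ∀ r, r ≤ n → (NC k n r : ℝ) =
    (n : ℝ) ^ ((k + 1) * r) - (r : ℝ) ^ (k + 1) * (n : ℝ) ^ ((k + 1) * (r - 1)) := by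
  intro r
  induction r using Nat.strong_induction_on with
  | _ r ih =>
    intro hrn
    rcases Nat.eq_zero_or_pos r with rfl | hr
    · rw [NC_zero]
      simp [zero_pow (Nat.succ_ne_zero k)]
    · have hI := master (k := k) (n := n) (r := r)
        (A := fun _ : Fin (k + 1) => Fin r) (B := fun _ : Fin (k + 1) => Fin (n - r)) hrn
        (fun _ => Fintype.card_fin r) (fun _ => Fintype.card_fin (n - r))
      have hIr : ((n : ℝ)) ^ ((k + 1) * r) = ∑ a ∈ Finset.range (r + 1),
          ((r.choose a : ℝ)) ^ (k + 1) * ((a.factorial : ℝ) ^ (k + 1) * (NC k n (r - a) : ℝ)) := by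
        exact_mod_cast congrArg (fun z : ℕ => (z : ℝ)) hI
      set D : ℕ → ℝ := fun a => ((r.descFactorial a : ℝ)) ^ (k + 1) *
        (n : ℝ) ^ ((k + 1) * (r - a)) with hD
      have hc : ∀ a : ℕ, ((r.choose a : ℝ)) ^ (k + 1) * ((a.factorial : ℝ)) ^ (k + 1) =
          ((r.descFactorial a : ℝ)) ^ (k + 1) := by
        intro a
        rw [← mul_pow]
        congr 1
        rw [← Nat.cast_mul]
        norm_cast
        rw [Nat.descFactorial_eq_factorial_mul_choose]
        ring
      have key : ∀ a ∈ Finset.range r,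
          ((r.choose (a + 1) : ℝ)) ^ (k + 1) *
            (((a + 1).factorial : ℝ) ^ (k + 1) * (NC k n (r - (a + 1)) : ℝ)) =
          D (a + 1) - D (a + 2) := by
        intro a ha
        have halt : a < r := Finset.mem_range.mp ha
        have hihv := ih (r - (a + 1)) (by omega) (by omega)
        rw [← mul_assoc, hc (a + 1), hihv]
        simp only [hD]
        have e2 : (r.descFactorial (a + 2) : ℝ) =
            ((r - (a + 1) : ℕ) : ℝ) * (r.descFactorial (a + 1) : ℝ) := by
          rw [← Nat.cast_mul]
          norm_cast
        have e3' : r - (a + 2) = r - (a + 1) - 1 := by omega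
        have e3 : (k + 1) * (r - (a + 2)) = (k + 1) * (r - (a + 1) - 1) := by rw [e3']
        rw [e3, e2, mul_pow, mul_sub]
        ring
      have hsum : ∑ a ∈ Finset.range (r + 1),
          ((r.choose a : ℝ)) ^ (k + 1) * ((a.factorial : ℝ) ^ (k + 1) * (NC k n (r - a) : ℝ)) =
          (NC k n r : ℝ) + (D 1 - D (r + 1)) := by
        rw [Finset.sum_range_succ']
        rw [Finset.sum_congr rfl key]
        rw [show (∑ a ∈ Finset.range r, (D (a + 1) - D (a + 2))) = D 1 - D (r + 1) from by
          have := Finset.sum_range_sub' (fun i => D (i + 1)) r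
          simpa using this]
        simp only [Nat.choose_zero_right, Nat.factorial_zero, Nat.cast_one, one_pow, one_mul,
          Nat.sub_zero]
        ring
      have hD1 : D 1 = (r : ℝ) ^ (k + 1) * (n : ℝ) ^ ((k + 1) * (r - 1)) := by
        simp [hD, Nat.descFactorial_one]
      have hDr1 : D (r + 1) = 0 := by
        simp only [hD]
        rw [show r.descFactorial (r + 1) = 0 from Nat.descFactorial_eq_zero_iff_lt.mpr (by omega)]
        simp [zero_pow (Nat.succ_ne_zero k)]
      rw [hsum, hD1, hDr1] at hIr
      linarith
end Closed
section BTuple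

variable {k : ℕ} {Y : Fin (k + 1) → Type u}

lemma step_injective (b : ∀ i : Fin (k + 1), Y i → Y (i + 1))
    (hb : ∀ i, Function.Injective (b i)) : Function.Injective (step b) := by
  rintro ⟨i, x⟩ ⟨j, y⟩ hxy
  have hfst : i + 1 = j + 1 := congrArg Sigma.fst hxy
  have hij : i = j := add_right_cancel hfst
  subst hij
  have hsnd : b i x = b i y := sigma_mk_eq_iff.mp hxy
  rw [hb i hsnd]

lemma comp_injective (b : ∀ i : Fin (k + 1), Y i → Y (i + 1))
    (hb : ∀ i, Function.Injective (b i)) : Function.Injective (comp b) := by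
  intro u v huv
  have h1 : (step b)^[k + 1] (⟨0, u⟩ : Σ i, Y i) = (step b)^[k + 1] ⟨0, v⟩ := by
    rw [comp_spec, comp_spec, huv]
  exact sigma_mk_eq_iff.mp (((step_injective b hb).iterate (k + 1)) h1)

lemma comp_bijective [∀ i, Finite (Y i)] (b : ∀ i : Fin (k + 1), Y i → Y (i + 1))
    (hb : ∀ i, Function.Bijective (b i)) : Function.Bijective (comp b) :=
  Finite.injective_iff_bijective.mp (comp_injective b fun i => (hb i).injective)

open Fin.NatCast Fin.CommRing in
lemma comp_precomp (f : ∀ i : Fin (k + 1), Y i → Y (i + 1)) (ρ : Y 0 → Y 0) (v : Y 0) :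
    comp (Function.update f 0 (f 0 ∘ ρ)) v = comp f (ρ v) := by
  have key : ∀ m : ℕ, 1 ≤ m → m ≤ k + 1 →
      (step (Function.update f 0 (f 0 ∘ ρ)))^[m] (⟨0, v⟩ : Σ i, Y i) =
        (step f)^[m] (⟨0, ρ v⟩ : Σ i, Y i) := by
    intro m
    induction m with
    | zero => intro h; omega
    | succ m ih =>
      intro _ hm1
      rcases Nat.eq_zero_or_pos m with rfl | hm
      · show step (Function.update f 0 (f 0 ∘ ρ)) ⟨0, v⟩ = step f ⟨0, ρ v⟩
        show (⟨(0 : Fin (k + 1)) + 1, Function.update f 0 (f 0 ∘ ρ) 0 v⟩ : Σ i, Y i) = _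
        rw [Function.update_self]
        rfl
      · rw [Function.iterate_succ_apply', Function.iterate_succ_apply', ih hm (by omega)]
        have hfst : ((step f)^[m] (⟨0, ρ v⟩ : Σ i, Y i)).1 = (m : Fin (k + 1)) := by
          rw [step_iterate_fst]
          simp
        have hne : ((step f)^[m] (⟨0, ρ v⟩ : Σ i, Y i)).1 ≠ 0 := by
          rw [hfst]
          intro hc
          rw [Fin.natCast_eq_zero] at hc
          have := Nat.le_of_dvd hm hc
          omega
        show (⟨_ + 1, Function.update f 0 (f 0 ∘ ρ) _ _⟩ : Σ i, Y i) = _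
        rw [Function.update_of_ne hne]
        rfl
  have h1 := key (k + 1) (by omega) le_rfl
  rw [comp_spec, comp_spec] at h1
  exact sigma_mk_eq_iff.mp h1

end BTuple

section BCount

attribute [local instance] Classical.propDecidable

variable {k : ℕ} {Y : Fin (k + 1) → Type u} [∀ i, Fintype (Y i)]

def Wt (Y : Fin (k + 1) → Type u) : Type u :=
  {b : ∀ i : Fin (k + 1), Y i → Y (i + 1) // ∀ i, Function.Bijective (b i)}

noncomputable instance : Fintype (Wt Y) := by unfold Wt; infer_instance

noncomputable def piW (b : Wt Y) : Equiv.Perm (Y 0) :=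
  Equiv.ofBijective (comp b.1) (comp_bijective b.1 b.2)

noncomputable def twW (ρ : Equiv.Perm (Y 0)) (b : Wt Y) : Wt Y :=
  ⟨Function.update b.1 0 (b.1 0 ∘ ρ), by
    intro i
    by_cases hi : i = 0
    · subst hi
      rw [Function.update_self]
      exact (b.2 0).comp ρ.bijective
    · rw [Function.update_of_ne hi]
      exact b.2 i⟩

lemma piW_tw (ρ : Equiv.Perm (Y 0)) (b : Wt Y) : piW (twW ρ b) = piW b * ρ := by
  apply Equiv.ext
  intro v
  show comp (Function.update b.1 0 (b.1 0 ∘ ρ)) v = (piW b * ρ) v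
  rw [comp_precomp]
  rfl

lemma twW_twW (ρ ρ' : Equiv.Perm (Y 0)) (b : Wt Y) :
    twW ρ' (twW ρ b) = twW (ρ * ρ') b := by
  apply Subtype.ext
  show Function.update (Function.update b.1 0 (b.1 0 ∘ ρ)) 0
      ((Function.update b.1 0 (b.1 0 ∘ ρ)) 0 ∘ ρ') = Function.update b.1 0 (b.1 0 ∘ ⇑(ρ * ρ'))
  rw [Function.update_self, Function.update_idem, Equiv.Perm.coe_mul]
  rfl

lemma twW_one (b : Wt Y) : twW 1 b = b := by
  apply Subtype.ext
  show Function.update b.1 0 (b.1 0 ∘ ⇑(1 : Equiv.Perm (Y 0))) = b.1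
  have : b.1 0 ∘ ⇑(1 : Equiv.Perm (Y 0)) = b.1 0 := rfl
  rw [this, Function.update_eq_self]

noncomputable def fibEquiv (σ τ : Equiv.Perm (Y 0)) :
    {b : Wt Y // piW b = σ} ≃ {b : Wt Y // piW b = τ} where
  toFun b := ⟨twW (σ⁻¹ * τ) b.1, by rw [piW_tw, b.2]; group⟩
  invFun b := ⟨twW (τ⁻¹ * σ) b.1, by rw [piW_tw, b.2]; group⟩
  left_inv b := by
    apply Subtype.ext
    show twW (τ⁻¹ * σ) (twW (σ⁻¹ * τ) b.1) = b.1
    rw [twW_twW]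
    have : (σ⁻¹ * τ) * (τ⁻¹ * σ) = 1 := by group
    rw [this, twW_one]
  right_inv b := by
    apply Subtype.ext
    show twW (σ⁻¹ * τ) (twW (τ⁻¹ * σ) b.1) = b.1
    rw [twW_twW]
    have : (τ⁻¹ * σ) * (σ⁻¹ * τ) = 1 := by group
    rw [this, twW_one]

variable {N : ℕ}

lemma card_W (hY : ∀ i, Fintype.card (Y i) = N) :
    Nat.card (Wt Y) = (N.factorial) ^ (k + 1) := by
  rw [show Wt Y = {b : ∀ i : Fin (k + 1), Y i → Y (i + 1) //
    ∀ i, Function.Bijective (b i)} from rfl]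
  rw [Nat.card_congr (Equiv.subtypePiEquivPi
    (p := fun i (g : Y i → Y (i + 1)) => Function.Bijective g)), Nat.card_pi]
  calc ∏ i, Nat.card {g : Y i → Y (i + 1) // Function.Bijective g}
      = ∏ _i : Fin (k + 1), N.factorial := by
        refine Finset.prod_congr rfl fun i _ => ?_
        rw [card_bij_subtype (by rw [hY i, hY (i + 1)]), hY i]
    _ = N.factorial ^ (k + 1) := by
        rw [Finset.prod_const, Finset.card_univ, Fintype.card_fin]

lemma card_W_fiber (hY : ∀ i, Fintype.card (Y i) = N) (σ : Equiv.Perm (Y 0)) :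
    Nat.card {b : Wt Y // piW b = σ} = (N.factorial) ^ k := by
  have htot : Nat.card (Wt Y) = ∑ σ' : Equiv.Perm (Y 0), Nat.card {b : Wt Y // piW b = σ'} := by
    rw [Nat.card_congr (Equiv.sigmaFiberEquiv piW).symm, nat_card_sigma]
  rw [Finset.sum_congr rfl (fun σ' _ => Nat.card_congr (fibEquiv σ' σ)),
    Finset.sum_const, Finset.card_univ, Fintype.card_perm, hY 0, smul_eq_mul,
    card_W hY, pow_succ'] at htot
  exact (Nat.eq_of_mul_eq_mul_left (Nat.factorial_pos N) htot.symm)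

lemma card_W_cyclic {M : ℕ} (hY : ∀ i, Fintype.card (Y i) = M + 1) :
    Nat.card {b : Wt Y // IsCyclicOn ⇑(piW b) Set.univ} =
      M.factorial * ((M + 1).factorial) ^ k := by
  have e1 : {b : Wt Y // IsCyclicOn ⇑(piW b) Set.univ} ≃
      Σ σ : Equiv.Perm (Y 0), {b : Wt Y // piW b = σ ∧ IsCyclicOn ⇑(piW b) Set.univ} := by
    refine ((Equiv.sigmaFiberEquiv
      (fun b : {b : Wt Y // IsCyclicOn ⇑(piW b) Set.univ} => piW b.1)).symm).trans ?_
    refine Equiv.sigmaCongrRight fun σ => ?_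
    refine (Equiv.subtypeSubtypeEquivSubtypeInter
      (fun b : Wt Y => IsCyclicOn ⇑(piW b) Set.univ)
      (fun b => piW b = σ)).trans (Equiv.subtypeEquivRight ?_)
    intro b
    tauto
  rw [Nat.card_congr e1, nat_card_sigma]
  have hfib : ∀ σ : Equiv.Perm (Y 0),
      Nat.card {b : Wt Y // piW b = σ ∧ IsCyclicOn ⇑(piW b) Set.univ} =
        if IsCyclicOn ⇑σ Set.univ then (M + 1).factorial ^ k else 0 := by
    intro σ
    by_cases hcyc : IsCyclicOn ⇑σ Set.univ
    · rw [if_pos hcyc, ← card_W_fiber hY σ]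
      apply Nat.card_congr
      refine Equiv.subtypeEquivRight fun b => ?_
      constructor
      · exact fun hh => hh.1
      · intro hh
        refine ⟨hh, ?_⟩
        rw [hh]
        exact hcyc
    · rw [if_neg hcyc]
      rw [Nat.card_eq_zero]
      left
      constructor
      rintro ⟨b, hbσ, hbc⟩
      rw [hbσ] at hbc
      exact hcyc hbc
  rw [Finset.sum_congr rfl (fun σ _ => hfib σ)]
  rw [Finset.sum_ite, Finset.sum_const_zero, add_zero, Finset.sum_const, smul_eq_mul]
  congr 1
  rw [← Fintype.card_subtype, ← Nat.card_eq_fintype_card]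
  exact card_cyclic_perm (hY 0)

end BCount
section Assembly

attribute [local instance] Classical.propDecidable

variable {k : ℕ} {X : Fin (k + 1) → Type u}

/-- the main system: `B` is empty. -/
def PE : Fin (k + 1) → Type u := fun _ => PEmpty

instance instFintypePE {k : ℕ} (i : Fin (k + 1)) : Fintype (PE (k := k) i) := by
  unfold PE
  infer_instance

def fEquiv : (∀ i : Fin (k + 1), X i → X (i + 1)) ≃ Tup X (PE (k := k)) where
  toFun f := fun i x => Sum.inl (f i x)
  invFun h := fun i x => Sum.elim id PEmpty.elim (h i x)
  left_inv f := rfl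
  right_inv h := by
    funext i x
    show Sum.inl (Sum.elim id PEmpty.elim (h i x)) = h i x
    rcases hx : h i x with a | e
    · rfl
    · exact e.elim

lemma pstep_fEquiv (f : ∀ i : Fin (k + 1), X i → X (i + 1)) (p : Σ i, X i) :
    pstep (fEquiv f) (some p) = some (step f p) := by
  obtain ⟨i, x⟩ := p
  exact pstep_some_inl (fEquiv f) rfl

lemma pstep_fEquiv_iterate (f : ∀ i : Fin (k + 1), X i → X (i + 1)) (p : Σ i, X i) (m : ℕ) :
    (pstep (fEquiv f))^[m] (some p) = some ((step f)^[m] p) := by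
  induction m generalizing p with
  | zero => rfl
  | succ m ih =>
    rw [Function.iterate_succ_apply, Function.iterate_succ_apply, pstep_fEquiv, ih]

lemma oper_fEquiv (f : ∀ i : Fin (k + 1), X i → X (i + 1)) :
    OPer (pstep (fEquiv f)) = Function.periodicPts (step f) := by
  ext p
  constructor
  · rintro ⟨m, hm, hper⟩
    rw [pstep_fEquiv_iterate] at hper
    exact ⟨m, hm, Option.some_injective _ hper⟩
  · rintro ⟨m, hm, hper⟩
    exact ⟨m, hm, by rw [pstep_fEquiv_iterate, hper.eq]⟩

lemma periodicPts_comp_eq (f : ∀ i : Fin (k + 1), X i → X (i + 1)) {U : ∀ i, Set (X i)}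
    (hPer : OPer (pstep (fEquiv f)) = sigU U) :
    Function.periodicPts (comp f) = U 0 := by
  ext x
  rw [← periodic_layer0 f x]
  have : (⟨0, x⟩ : Σ i, X i) ∈ Function.periodicPts (step f) ↔
      (⟨0, x⟩ : Σ i, X i) ∈ OPer (pstep (fEquiv f)) := by rw [oper_fEquiv]
  rw [this, hPer]
  rfl

lemma comp_restrict {U : ∀ i, Set (X i)} (f : ∀ i : Fin (k + 1), X i → X (i + 1))
    (b : ∀ i, ↥(U i) → ↥(U (i + 1)))
    (hfb : ∀ (i : Fin (k + 1)) (u : ↥(U i)), f i u.1 = (b i u).1) (u : ↥(U 0)) :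
    comp f u.1 = (comp b u).1 := by
  have key : ∀ (m : ℕ) (p : Σ i, (fun j => ↥(U j)) i),
      (step f)^[m] (⟨p.1, p.2.1⟩ : Σ i, X i) = ⟨((step b)^[m] p).1, ((step b)^[m] p).2.1⟩ := by
    intro m
    induction m with
    | zero => intro p; rfl
    | succ m ih =>
      intro p
      rw [Function.iterate_succ_apply, Function.iterate_succ_apply]
      have h1 : step f (⟨p.1, p.2.1⟩ : Σ i, X i) = ⟨(step b p).1, (step b p).2.1⟩ := by
        show (⟨p.1 + 1, f p.1 p.2.1⟩ : Σ i, X i) = ⟨p.1 + 1, (b p.1 p.2).1⟩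
        rw [hfb p.1 p.2]
      rw [h1]
      exact ih (step b p)
  have h2 := key (k + 1) ⟨0, u⟩
  rw [comp_spec, comp_spec] at h2
  exact sigma_mk_eq_iff.mp h2

lemma comp_restrict_iterate {U : ∀ i, Set (X i)} (f : ∀ i : Fin (k + 1), X i → X (i + 1))
    (b : ∀ i, ↥(U i) → ↥(U (i + 1)))
    (hfb : ∀ (i : Fin (k + 1)) (u : ↥(U i)), f i u.1 = (b i u).1) (u : ↥(U 0)) (j : ℕ) :
    (comp f)^[j] u.1 = ((comp b)^[j] u).1 := by
  induction j generalizing u with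
  | zero => rfl
  | succ j ih =>
    rw [Function.iterate_succ_apply, Function.iterate_succ_apply,
      comp_restrict f b hfb u]
    exact ih (comp b u)

lemma cyclic_transfer {U : ∀ i, Set (X i)} (f : ∀ i : Fin (k + 1), X i → X (i + 1))
    (b : ∀ i, ↥(U i) → ↥(U (i + 1)))
    (hfb : ∀ (i : Fin (k + 1)) (u : ↥(U i)), f i u.1 = (b i u).1) :
    IsCyclicOn (comp f) (U 0) ↔ IsCyclicOn (comp b) Set.univ := by
  constructor
  · rintro ⟨hbij, htrans⟩
    constructor
    · rw [Set.bijOn_univ]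
      constructor
      · intro u v huv
        have h1 : comp f u.1 = comp f v.1 := by
          rw [comp_restrict f b hfb u, comp_restrict f b hfb v, huv]
        exact Subtype.ext (hbij.2.1 u.2 v.2 h1)
      · intro v
        obtain ⟨x, hx, hgx⟩ := hbij.2.2 v.2
        refine ⟨⟨x, hx⟩, ?_⟩
        apply Subtype.ext
        rw [← comp_restrict f b hfb ⟨x, hx⟩]
        exact hgx
    · intro u _ v _
      obtain ⟨j, hj⟩ := htrans u.1 u.2 v.1 v.2
      refine ⟨j, Subtype.ext ?_⟩
      rw [← comp_restrict_iterate f b hfb u j]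
      exact hj
  · rintro ⟨hbij, htrans⟩
    have hbij' := Set.bijOn_univ.mp hbij
    constructor
    · refine ⟨?_, ?_, ?_⟩
      · intro x hx
        rw [show x = (⟨x, hx⟩ : ↥(U 0)).1 from rfl, comp_restrict f b hfb ⟨x, hx⟩]
        exact (comp b ⟨x, hx⟩).2
      · intro x hx y hy hxy
        rw [show x = (⟨x, hx⟩ : ↥(U 0)).1 from rfl, comp_restrict f b hfb ⟨x, hx⟩] at hxy
        rw [show y = (⟨y, hy⟩ : ↥(U 0)).1 from rfl, comp_restrict f b hfb ⟨y, hy⟩] at hxy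
        have := hbij'.injective (Subtype.ext hxy)
        exact congrArg Subtype.val this
      · intro y hy
        obtain ⟨u, hu⟩ := hbij'.surjective ⟨y, hy⟩
        refine ⟨u.1, u.2, ?_⟩
        rw [comp_restrict f b hfb u, hu]
    · intro x hx y hy
      obtain ⟨j, hj⟩ := htrans ⟨x, hx⟩ trivial ⟨y, hy⟩ trivial
      refine ⟨j, ?_⟩
      rw [show x = (⟨x, hx⟩ : ↥(U 0)).1 from rfl, comp_restrict_iterate f b hfb ⟨x, hx⟩ j, hj]

def prodSubtypeFst {α : Type*} {β : Type*} (p : α → Prop) :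
    {z : α × β // p z.1} ≃ {a // p a} × β where
  toFun z := (⟨z.1.1, z.2⟩, z.1.2)
  invFun w := ⟨(w.1.1, w.2), w.1.2⟩
  left_inv z := rfl
  right_inv w := rfl

theorem main_count {N n : ℕ} (hN : 1 ≤ N) (hn : N + 1 ≤ n)
    [∀ i, Fintype (X i)] (hcard : ∀ i, Fintype.card (X i) = n) :
    Nat.card {f : ∀ i : Fin (k + 1), X i → X (i + 1) // EventuallyNCyclic N f} =
      (n.choose N) ^ (k + 1) *
        ((N - 1).factorial * (N.factorial) ^ k * NC k n (n - N)) := by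
  classical
  -- transfer to the Tup model
  set P : Tup X (PE (k := k)) → Prop := fun h => EventuallyNCyclic N (fEquiv.symm h) with hP
  have e0 : {f : ∀ i : Fin (k + 1), X i → X (i + 1) // EventuallyNCyclic N f} ≃
      {h : Tup X (PE (k := k)) // P h} :=
    Equiv.subtypeEquiv fEquiv (fun f => by rw [hP]; simp)
  rw [Nat.card_congr e0]
  -- partition over layer tuples
  have e1 : {h : Tup X (PE (k := k)) // P h} ≃
      Σ U : ∀ i, Set (X i), {h : Tup X (PE (k := k)) // layerOf h = U ∧ P h} := by
    refine ((Equiv.sigmaFiberEquiv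
      (fun hh : {h : Tup X (PE (k := k)) // P h} => layerOf hh.1)).symm).trans ?_
    refine Equiv.sigmaCongrRight fun U => ?_
    refine (Equiv.subtypeSubtypeEquivSubtypeInter
      (fun h : Tup X (PE (k := k)) => P h) (fun h => layerOf h = U)).trans
      (Equiv.subtypeEquivRight ?_)
    intro h
    tauto
  rw [Nat.card_congr e1, nat_card_sigma]
  -- fiber computation
  have hfib : ∀ U : ∀ i, Set (X i),
      Nat.card {h : Tup X (PE (k := k)) // layerOf h = U ∧ P h} =
        if (∀ i, (U i).ncard = N) then
          ((N - 1).factorial * (N.factorial) ^ k) * NC k n (n - N) else 0 := by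
    intro U
    have hrw : ∀ h : Tup X (PE (k := k)),
        (layerOf h = U ∧ P h) ↔ (OPer (pstep h) = sigU U ∧ P h) := fun h =>
      and_congr_left' (layerOf_eq_iff h U)
    rw [Nat.card_congr (Equiv.subtypeEquivRight hrw)]
    by_cases hU : ∀ i, (U i).ncard = N
    · rw [if_pos hU]
      -- card of each layer subtype
      have hcardU : ∀ i, Fintype.card ↥(U i) = N := fun i => by
        rw [← ncard_eq_card_coe, hU]
      -- move to subtype-of-subtype and through the slice equivalence
      have e2 : {h : Tup X (PE (k := k)) // OPer (pstep h) = sigU U ∧ P h} ≃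
          {hh : {h : Tup X (PE (k := k)) // OPer (pstep h) = sigU U} // P hh.1} :=
        ((Equiv.subtypeSubtypeEquivSubtypeInter
          (fun h : Tup X (PE (k := k)) => OPer (pstep h) = sigU U) (fun h => P h))).symm
      rw [Nat.card_congr e2]
      have e3 : {hh : {h : Tup X (PE (k := k)) // OPer (pstep h) = sigU U} // P hh.1} ≃
          {z : _ // P (((sliceEquiv U).symm z) : {h : Tup X (PE (k := k)) //
            OPer (pstep h) = sigU U}).1} :=
        Equiv.subtypeEquiv (sliceEquiv U) (fun hh => by rw [Equiv.symm_apply_apply])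
      rw [Nat.card_congr e3]
      -- identify the predicate on the product
      have hpred : ∀ z : ({b : ∀ i, ↥(U i) → ↥(U (i + 1)) // ∀ i, Function.Bijective (b i)} ×
          {h' : Tup (fun i => ↥(U i)ᶜ) (fun i => ↥(U i) ⊕ PE (k := k) i) //
            OPer (pstep h') = ∅}),
          P (((sliceEquiv U).symm z).1) ↔
            IsCyclicOn (comp (X := fun i => ↥(U i)) z.1.1) Set.univ := by
        rintro ⟨bb, hh'⟩
        set h : Tup X (PE (k := k)) := glueOf bb.1 hh'.1 with hh
        have hsymm : (((sliceEquiv U).symm (bb, hh')) :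
            {h : Tup X (PE (k := k)) // OPer (pstep h) = sigU U}).1 = h := rfl
        rw [hsymm]
        set f := fEquiv.symm h with hf
        have hfe : fEquiv f = h := by rw [hf, Equiv.apply_symm_apply]
        have hPer : OPer (pstep (fEquiv f)) = sigU U := by
          rw [hfe]
          exact ((sliceEquiv U).symm (bb, hh')).2
        have hfb : ∀ (i : Fin (k + 1)) (u : ↥(U i)), f i u.1 = (bb.1 i u).1 := by
          intro i u
          have h1 : h i u.1 = Sum.inl (bb.1 i u).1 := (compat_glue bb.1 hh'.1).1 i u
          show Sum.elim id PEmpty.elim (h i u.1) = (bb.1 i u).1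
          rw [h1]
          rfl
        have hper0 : Function.periodicPts (comp f) = U 0 := periodicPts_comp_eq f hPer
        rw [hP]
        show EventuallyNCyclic N f ↔ _
        rw [enc_iff N f, hper0]
        rw [cyclic_transfer f bb.1 hfb]
        constructor
        · exact fun hh2 => hh2.2
        · exact fun hh2 => ⟨hU 0, hh2⟩
      rw [Nat.card_congr (Equiv.subtypeEquivRight hpred)]
      rw [Nat.card_congr (prodSubtypeFst
        (fun bb : {b : ∀ i, ↥(U i) → ↥(U (i + 1)) // ∀ i, Function.Bijective (b i)} =>
          IsCyclicOn (comp (X := fun i => ↥(U i)) bb.1) Set.univ))]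
      rw [Nat.card_prod]
      congr 1
      · -- cyclic b-tuples
        have := card_W_cyclic (k := k) (Y := fun i => ↥(U i)) (M := N - 1)
          (fun i => by rw [hcardU i]; omega)
        rw [show N - 1 + 1 = N from by omega] at this
        rw [← this]
        rfl
      · -- no-cycle count
        refine NC_eq (fun i => ?_) (fun i => ?_)
        · rw [Fintype.card_compl_set, hcardU i, hcard i]
        · rw [Fintype.card_sum, hcardU i]
          have hpe : Fintype.card (PE (k := k) i) = 0 := by
            have he : IsEmpty (PE (k := k) i) := by unfold PE; infer_instance
            exact @Fintype.card_eq_zero _ _ he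
          rw [hpe]
          omega
    · rw [if_neg hU]
      rw [Nat.card_eq_zero]
      left
      constructor
      rintro ⟨h, hPer, hEnc⟩
      apply hU
      -- all layers have equal size via bOf, and layer 0 has size N via ENC
      have hb := ((slice_iff (compat_ofPer h hPer)).mp hPer).1
      have hall : ∀ i, (U i).ncard = (U 0).ncard := by
        have hstep : ∀ j : Fin (k + 1), (U j).ncard = (U (j + 1)).ncard := fun j => by
          rw [ncard_eq_card_coe, ncard_eq_card_coe]
          exact Fintype.card_of_bijective (hb j)
        exact fun i => fin_cyclic_const hstep i
      have hf0 : (U 0).ncard = N := by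
        set f := fEquiv.symm h with hf
        have hfe : fEquiv f = h := by rw [hf, Equiv.apply_symm_apply]
        have hPer' : OPer (pstep (fEquiv f)) = sigU U := by rw [hfe]; exact hPer
        have hper0 : Function.periodicPts (comp f) = U 0 := periodicPts_comp_eq f hPer'
        have := ((enc_iff N f).mp hEnc).1
        rwa [hper0] at this
      intro i
      rw [hall i, hf0]
  rw [Finset.sum_congr rfl (fun U _ => hfib U)]
  rw [Finset.sum_ite, Finset.sum_const_zero, add_zero, Finset.sum_const, smul_eq_mul]
  have hcount : (Finset.filter (fun U : ∀ i, Set (X i) => ∀ i, (U i).ncard = N)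
      Finset.univ).card = (n.choose N) ^ (k + 1) := by
    rw [← Fintype.card_subtype, ← Nat.card_eq_fintype_card]
    rw [Nat.card_congr (Equiv.subtypePiEquivPi
      (p := fun i (S : Set (X i)) => S.ncard = N)), Nat.card_pi]
    calc ∏ i, Nat.card {S : Set (X i) // S.ncard = N}
        = ∏ _i : Fin (k + 1), n.choose N := by
          refine Finset.prod_congr rfl fun i _ => ?_
          rw [card_ncard_subtype, hcard]
      _ = (n.choose N) ^ (k + 1) := by
          rw [Finset.prod_const, Finset.card_univ, Fintype.card_fin]
  rw [hcount]

end Assembly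
/-- For `k+1` sets of cardinality `n ≥ N+1`, the probability that a uniformly random
`(k+1)`-tuple is eventually `N`-cyclic (the number of eventually `N`-cyclic tuples
divided by `n^((k+1)n)`) equals
`(1/N) · n^(−(k+1)(N−1)) · ((n−1)!/(n−N)!)^(k+1) · (1 − (1 − N/n)^(k+1))`. -/
theorem stmt13 (k N n : ℕ) (hN : 1 ≤ N) (hn : N + 1 ≤ n)
    (X : Fin (k + 1) → Type u) [∀ i, Fintype (X i)]
    (hcard : ∀ i, Fintype.card (X i) = n) :
    (Nat.card {f : ∀ i : Fin (k + 1), X i → X (i + 1) // EventuallyNCyclic N f} : ℝ) /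
        (n : ℝ) ^ ((k + 1) * n) =
      (1 / (N : ℝ)) * ((n : ℝ) ^ ((k + 1) * (N - 1)))⁻¹ *
        (((n - 1).factorial : ℝ) / ((n - N).factorial : ℝ)) ^ (k + 1) *
        (1 - (1 - (N : ℝ) / (n : ℝ)) ^ (k + 1)) := by
  rw [main_count hN hn hcard]
  have hNC := NC_closed (k := k) (n := n) (n - N) (by omega)
  have hn0 : (n : ℝ) ≠ 0 := Nat.cast_ne_zero.mpr (by omega)
  have hnpos : (0 : ℝ) < (n : ℝ) := by
    have : (0 : ℕ) < n := by omega
    exact_mod_cast this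
  have hN0 : (N : ℝ) ≠ 0 := Nat.cast_ne_zero.mpr (by omega)
  have hF2 : ((n - N).factorial : ℝ) ≠ 0 := Nat.cast_ne_zero.mpr (Nat.factorial_ne_zero _)
  have hFN1 : ((N - 1).factorial : ℝ) ≠ 0 := Nat.cast_ne_zero.mpr (Nat.factorial_ne_zero _)
  have hFn1 : ((n - 1).factorial : ℝ) ≠ 0 := Nat.cast_ne_zero.mpr (Nat.factorial_ne_zero _)
  have hchoose : ((n.choose N : ℕ) : ℝ) =
      (n.factorial : ℝ) / ((N.factorial : ℝ) * ((n - N).factorial : ℝ)) :=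
    Nat.cast_choose ℝ (by omega)
  have hfn : (n.factorial : ℝ) = (n : ℝ) * ((n - 1).factorial : ℝ) := by
    have := Nat.mul_factorial_pred (n := n) (by omega)
    exact_mod_cast this.symm
  have hfN : (N.factorial : ℝ) = (N : ℝ) * ((N - 1).factorial : ℝ) := by
    have := Nat.mul_factorial_pred (n := N) (by omega)
    exact_mod_cast this.symm
  have hNK : ((n - N : ℕ) : ℝ) = (n : ℝ) - (N : ℝ) := by
    rw [Nat.cast_sub (by omega)]
  have hx1 : (k + 1) * (n - N) = (k + 1) * (n - N - 1) + (k + 1) := by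
    set t := n - N - 1 with ht
    have htt : n - N = t + 1 := by omega
    rw [htt]
    ring
  have P1 : (n : ℝ) ^ ((k + 1) * (n - N)) =
      (n : ℝ) ^ ((k + 1) * (n - N - 1)) * (n : ℝ) ^ (k + 1) := by
    rw [hx1, pow_add]
  have hx2 : (k + 1) * n =
      (k + 1) * (N - 1) + ((k + 1) * (n - N - 1) + ((k + 1) + (k + 1))) := by
    set a := N - 1 with ha
    set b := n - N - 1 with hb
    have hnab : n = a + b + 2 := by omega
    rw [hnab]
    ring
  have P2 : (n : ℝ) ^ ((k + 1) * n) =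
      (n : ℝ) ^ ((k + 1) * (N - 1)) * ((n : ℝ) ^ ((k + 1) * (n - N - 1)) *
        ((n : ℝ) ^ (k + 1) * (n : ℝ) ^ (k + 1))) := by
    rw [hx2, pow_add, pow_add, pow_add]
  have hsub : (1 : ℝ) - (N : ℝ) / (n : ℝ) = ((n : ℝ) - (N : ℝ)) / (n : ℝ) := by
    field_simp
  push_cast
  rw [hNC, hchoose, hfn, hfN, hNK, P1, P2, hsub, div_pow]
  have hp1 : (n : ℝ) ^ ((k + 1) * (N - 1)) ≠ 0 := pow_ne_zero _ hn0
  have hp2 : (n : ℝ) ^ ((k + 1) * (n - N - 1)) ≠ 0 := pow_ne_zero _ hn0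
  have hp3 : (n : ℝ) ^ (k + 1) ≠ 0 := pow_ne_zero _ hn0
  rw [div_pow, div_pow]
  field_simp
  ring
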